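/- Let C = [[13,−2],[20,−3]], W₂₀ = [[1,0],[20,1]], and L₂₀ = [[4,−1/2],[10,−1]] ∈ SL(2,ℝ). Then each of the eight matrices P₁ = [[1,1],[0,1]], Q = [[−1,0],[0,−1]], C, L₂₀W₂₀L₂₀⁻¹, L₂₀⁻¹W₂₀L₂₀, L₂₀CL₂₀⁻¹, L₂₀⁻¹CL₂₀, and L₂₀³ has integer entries and lies in Γ₀(20), and together these eight matrices generate Γ₀(20). -/

import Mathlib

/-!
The eight real matrices are images of integer matrices; let `H ≤ Γ₀(20)` be the subgroup of
`SL(2, ℤ)` they generate. The index of `Γ₀(20)` is `20 · (1 + 1/2) · (1 + 1/5) = 36`, and we fix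
36 representatives `rᵢ`, with `r₀ = 1` and no other `rᵢ` in `Γ₀(20)`. A coset table shows
`rᵢ s ∈ H rⱼ` for `s ∈ {S, T}`. As `S` and `T` generate `SL(2, ℤ)` as a monoid, every `g` then lies
in some `H rⱼ`; for `g ∈ Γ₀(20)` this forces `rⱼ ∈ Γ₀(20)`, so `rⱼ = 1` and `g ∈ H`.
-/

open Matrix MatrixGroups

noncomputable def Cmat : SL(2, ℝ) :=
  ⟨!![13, -2; 20, -3], by norm_num [Matrix.det_fin_two_of]⟩

noncomputable def Wmat : SL(2, ℝ) :=
  ⟨!![1, 0; 20, 1], by norm_num [Matrix.det_fin_two_of]⟩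

noncomputable def Lmat : SL(2, ℝ) :=
  ⟨!![4, -1/2; 10, -1], by norm_num [Matrix.det_fin_two_of]⟩

noncomputable def Pmat : SL(2, ℝ) :=
  ⟨!![1, 1; 0, 1], by norm_num [Matrix.det_fin_two_of]⟩

noncomputable def Qmat : SL(2, ℝ) :=
  ⟨!![-1, 0; 0, -1], by norm_num [Matrix.det_fin_two_of]⟩

open ModularGroup

theorem Subgroup.forall_exists_mul_eq_of_closure_eq_top {G ι : Type*} [Group G] {H : Subgroup G}
    {s : Set G} (hs : Submonoid.closure s = ⊤) (r : ι → G)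
    (hr : ∀ i, ∀ x ∈ s, ∃ j, ∃ h ∈ H, r i * x = h * r j) (g : G) (i : ι) :
    ∃ j, ∃ h ∈ H, r i * g = h * r j := by
  have hg : g ∈ Submonoid.closure s := hs ▸ Submonoid.mem_top g
  induction hg using Submonoid.closure_induction generalizing i with
  | mem x hx => exact hr i x hx
  | one => exact ⟨i, 1, H.one_mem, by rw [mul_one, one_mul]⟩
  | mul x y _ _ ihx ihy =>
    obtain ⟨j, h, hh, hij⟩ := ihx i
    obtain ⟨k, h', hh', hjk⟩ := ihy j
    exact ⟨k, h * h', H.mul_mem hh hh', by rw [← mul_assoc, hij, mul_assoc, hjk, ← mul_assoc]⟩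

theorem Subgroup.eq_of_le_of_forall_exists_mul_eq {G ι : Type*} [Group G] {H K : Subgroup G}
    {s : Set G} (hs : Submonoid.closure s = ⊤) (r : ι → G) {i₀ : ι} (hr₀ : r i₀ = 1)
    (hr : ∀ i, ∀ x ∈ s, ∃ j, ∃ h ∈ H, r i * x = h * r j)
    (hHK : H ≤ K) (hK : ∀ i, r i ∈ K → r i = 1) : H = K := by
  refine le_antisymm hHK fun g hg => ?_
  obtain ⟨j, h, hh, hgj⟩ := H.forall_exists_mul_eq_of_closure_eq_top hs r hr g i₀
  rw [hr₀, one_mul] at hgj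
  have hrj : r j ∈ K := by
    simpa [hgj] using K.mul_mem (K.inv_mem (hHK hh)) hg
  rw [hgj, hK j hrj, mul_one]
  exact hh

theorem ModularGroup.submonoid_closure_S_T_eq_top : Submonoid.closure {S, T} = ⊤ := by
  have hS : S⁻¹ = S * S * S := by decide
  -- `(S * T) ^ 3 = S ^ 2` and `S ^ 4 = 1`
  have hT : T⁻¹ = S * T * S * T * S * S * S := by decide
  have hS_mem : S ∈ Submonoid.closure {S, T} := Submonoid.subset_closure (by simp)
  have hT_mem : T ∈ Submonoid.closure {S, T} := Submonoid.subset_closure (by simp)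
  rw [eq_top_iff, ← Subgroup.top_toSubmonoid, ← SpecialLinearGroup.SL2Z_generators,
    Subgroup.closure_toSubmonoid, Submonoid.closure_le]
  rintro x ((rfl | rfl) | (hx | hx))
  · exact hS_mem
  · exact hT_mem
  · rw [← inv_inv x, hx, hS]
    apply_rules [mul_mem]
  · rw [← inv_inv x, hx, hT]
    apply_rules [mul_mem]

def Matrix.SpecialLinearGroup.mkFinTwo {R : Type*} [CommRing R] (a b c d : R)
    (h : a * d - b * c = 1 := by norm_num) : SL(2, R) :=
  ⟨!![a, b; c, d], by rw [det_fin_two_of]; exact h⟩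

namespace Gamma0Twenty

open Matrix.SpecialLinearGroup

def P : SL(2, ℤ) := mkFinTwo 1 1 0 1
def Q : SL(2, ℤ) := mkFinTwo (-1) 0 0 (-1)
def C : SL(2, ℤ) := mkFinTwo 13 (-2) 20 (-3)
def LWLinv : SL(2, ℤ) := mkFinTwo 11 (-5) 20 (-9)
def LinvWL : SL(2, ℤ) := mkFinTwo 41 (-5) 320 (-39)
def LCLinv : SL(2, ℤ) := mkFinTwo 23 (-5) 60 (-13)
def LinvCL : SL(2, ℤ) := mkFinTwo (-7) 1 (-120) 17
def Lcube : SL(2, ℤ) := mkFinTwo 29 (-4) 80 (-11)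

def gens : Set SL(2, ℤ) := {P, Q, C, LWLinv, LinvWL, LCLinv, LinvCL, Lcube}

theorem gens_subset_Gamma0 : gens ⊆ CongruenceSubgroup.Gamma0 20 := by
  simp only [gens, Set.insert_subset_iff, Set.singleton_subset_iff, SetLike.mem_coe,
    CongruenceSubgroup.Gamma0_mem]
  decide

theorem map_gens : Matrix.SpecialLinearGroup.map (Int.castRingHom ℝ) '' gens =
    {Pmat, Qmat, Cmat, Lmat * Wmat * Lmat⁻¹, Lmat⁻¹ * Wmat * Lmat,
      Lmat * Cmat * Lmat⁻¹, Lmat⁻¹ * Cmat * Lmat, Lmat ^ 3} := by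
  simp only [gens, Set.image_insert_eq, Set.image_singleton]
  congr! <;> ext i j <;> fin_cases i <;> fin_cases j <;>
    norm_num [↓map_apply_coe, ↓coe_mul, ↓coe_inv, ↓coe_pow, P, Q, C, LWLinv, LinvWL, LCLinv, LinvCL,
      Lcube, mkFinTwo, Pmat, Qmat, Cmat, Wmat, Lmat, adjugate_fin_two_of, pow_three, mul_apply,
      Fin.sum_univ_two]

/-- Representatives of `Γ₀(20) \ SL(2, ℤ)`: their bottom rows run once through the 36 points of
`ℙ¹(ℤ/20ℤ)`. -/
def reps : Fin 36 → SL(2, ℤ) :=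
  ![1, mkFinTwo 0 (-1) 1 0, mkFinTwo 0 (-1) 1 1, mkFinTwo 0 (-1) 1 2, mkFinTwo 0 (-1) 1 3,
    mkFinTwo 0 (-1) 1 4, mkFinTwo 0 (-1) 1 5, mkFinTwo 0 (-1) 1 6, mkFinTwo 0 (-1) 1 7,
    mkFinTwo 0 (-1) 1 8, mkFinTwo 0 (-1) 1 9, mkFinTwo 0 (-1) 1 (-10), mkFinTwo 0 (-1) 1 (-9),
    mkFinTwo 0 (-1) 1 (-8), mkFinTwo 0 (-1) 1 (-7), mkFinTwo 0 (-1) 1 (-6),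
    mkFinTwo 0 (-1) 1 (-5), mkFinTwo 0 (-1) 1 (-4), mkFinTwo 0 (-1) 1 (-3),
    mkFinTwo 0 (-1) 1 (-2), mkFinTwo 0 (-1) 1 (-1),
    mkFinTwo 1 0 2 1, mkFinTwo 1 1 2 3, mkFinTwo 1 2 2 5, mkFinTwo 1 3 2 7, mkFinTwo 1 4 2 9,
    mkFinTwo 1 0 4 1, mkFinTwo (-1) (-1) 4 3, mkFinTwo 1 1 4 5, mkFinTwo (-1) (-2) 4 7,
    mkFinTwo 1 2 4 9,
    mkFinTwo 1 0 5 1, mkFinTwo (-2) (-1) 5 2, mkFinTwo 2 1 5 3, mkFinTwo (-1) (-1) 5 4,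
    mkFinTwo 1 0 (-10) 1]

theorem reps_eq_one_of_mem_Gamma0 : ∀ i, reps i ∈ CongruenceSubgroup.Gamma0 20 → reps i = 1 := by
  simp only [CongruenceSubgroup.Gamma0_mem]
  decide

def nextS : Fin 36 → Fin 36 :=
  ![1, 0, 20, 25, 14, 30, 33, 22, 18, 29, 12, 35, 10, 27, 4, 24, 31, 26, 8, 21, 2, 19, 7, 32, 15,
    3, 17, 13, 34, 9, 5, 16, 23, 6, 28, 11]

def wordS : Fin 36 → SL(2, ℤ) :=
  ![1, Q, P⁻¹, P⁻¹ * LWLinv, P⁻¹ * C * Q, P⁻¹ * C * Lcube⁻¹ * LCLinv, P⁻¹ * C * Lcube⁻¹,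
    P⁻¹ * C * Lcube⁻¹, P⁻¹ * C * Lcube⁻¹ * Q,
    P⁻¹ * C * Lcube⁻¹ * LCLinv⁻¹ * Lcube * LinvWL * C⁻¹ * P * Q,
    P⁻¹ * C * Lcube⁻¹ * LCLinv⁻¹ * Lcube * LinvWL * Q, LinvCL * C⁻¹ * P * Q,
    LinvWL⁻¹ * Lcube⁻¹ * LCLinv * Lcube * C⁻¹ * P, C⁻¹ * P, C⁻¹ * P, C⁻¹ * LWLinv * Q, Q, Q,
    Lcube * C⁻¹ * P, Q, P * Q, 1, Lcube * C⁻¹ * P * Q, LWLinv⁻¹ * P * Q, LWLinv⁻¹ * C,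
    LWLinv⁻¹ * P * Q, 1, P⁻¹ * C * Q, LCLinv⁻¹ * Lcube * C⁻¹ * P * Q,
    P⁻¹ * C * LinvWL⁻¹ * Lcube⁻¹ * LCLinv * Lcube * C⁻¹ * P, LCLinv⁻¹ * Lcube * C⁻¹ * P * Q, 1,
    P⁻¹ * LWLinv, Lcube * C⁻¹ * P * Q, P⁻¹ * C * Lcube⁻¹ * LCLinv, P⁻¹ * C * LinvCL⁻¹]

def nextT : Fin 36 → Fin 36 :=
  ![0, 2, 3, 4, 5, 6, 7, 8, 9, 10, 11, 12, 13, 14, 15, 16, 17, 18, 19, 20, 1, 22, 23, 24, 25, 21,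
    28, 29, 30, 26, 27, 32, 33, 34, 31, 35]

def wordT : Fin 36 → SL(2, ℤ) :=
  ![P, 1, 1, 1, 1, 1, 1, 1, 1, 1, P⁻¹ * C * LinvCL⁻¹, 1, 1, 1, 1, 1, 1, 1, 1, 1, 1, 1, 1, 1, 1,
    LWLinv⁻¹, 1, 1, 1, P⁻¹ * C * LinvWL⁻¹ * Lcube⁻¹ * LCLinv, LCLinv⁻¹ * Lcube * C⁻¹ * P, C⁻¹ * P,
    P⁻¹ * LWLinv * Q, Lcube * C⁻¹ * P, P⁻¹ * C * Lcube⁻¹ * LCLinv * Q,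
    P⁻¹ * C * Lcube⁻¹ * LCLinv⁻¹ * Lcube * LinvWL * LinvCL * C⁻¹ * P]

theorem reps_mul_S : ∀ i, reps i * S = wordS i * reps (nextS i) := by decide

theorem reps_mul_T : ∀ i, reps i * T = wordT i * reps (nextT i) := by decide

theorem words_mem (i : Fin 36) :
    wordS i ∈ Subgroup.closure gens ∧ wordT i ∈ Subgroup.closure gens := by
  fin_cases i <;>
    simp [wordS, wordT, gens, Subgroup.mul_mem_cancel_right, Subgroup.mem_closure_of_mem]

theorem closure_gens_eq_Gamma0 : Subgroup.closure gens = CongruenceSubgroup.Gamma0 20 := by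
  refine Subgroup.eq_of_le_of_forall_exists_mul_eq submonoid_closure_S_T_eq_top reps (i₀ := 0)
    rfl ?_ ((Subgroup.closure_le _).mpr gens_subset_Gamma0) reps_eq_one_of_mem_Gamma0
  rintro i x (rfl | rfl)
  · exact ⟨nextS i, wordS i, (words_mem i).1, reps_mul_S i⟩
  · exact ⟨nextT i, wordT i, (words_mem i).2, reps_mul_T i⟩

end Gamma0Twenty

/-- Each of the eight matrices `P₁, Q, C, L₂₀W₂₀L₂₀⁻¹, L₂₀⁻¹W₂₀L₂₀, L₂₀CL₂₀⁻¹, L₂₀⁻¹CL₂₀, L₂₀³`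
has integer entries and lies in `Γ₀(20)`, and they generate (the image in `SL(2,ℝ)` of)
`Γ₀(20)`. -/
theorem gamma0_20_generated_by_L_conjugates :
    (∀ m ∈ ({Pmat, Qmat, Cmat,
        Lmat * Wmat * Lmat⁻¹, Lmat⁻¹ * Wmat * Lmat,
        Lmat * Cmat * Lmat⁻¹, Lmat⁻¹ * Cmat * Lmat, Lmat ^ 3} : Set SL(2, ℝ)),
      ∃ g : SL(2, ℤ), g ∈ CongruenceSubgroup.Gamma0 20 ∧
        Matrix.SpecialLinearGroup.map (Int.castRingHom ℝ) g = m) ∧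
    Subgroup.closure
      ({Pmat, Qmat, Cmat,
        Lmat * Wmat * Lmat⁻¹, Lmat⁻¹ * Wmat * Lmat,
        Lmat * Cmat * Lmat⁻¹, Lmat⁻¹ * Cmat * Lmat, Lmat ^ 3} : Set SL(2, ℝ)) =
      Subgroup.map (Matrix.SpecialLinearGroup.map (Int.castRingHom ℝ))
        (CongruenceSubgroup.Gamma0 20) := by
  rw [← Gamma0Twenty.map_gens]
  refine ⟨?_, by rw [← MonoidHom.map_closure, Gamma0Twenty.closure_gens_eq_Gamma0]⟩
  rintro _ ⟨g, hg, rfl⟩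
  exact ⟨g, Gamma0Twenty.gens_subset_Gamma0 hg, rfl⟩
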